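/- Let n ≥ 3 and d ≥ n be integers. In the ring ℤ[L, L⁻¹, h]⟦T⟧ (h a formal variable), define for each m ≥ 1 the coefficient c_m = h·L²·Σ_{i ∈ (−m/d, 0] ∩ ℤ} L^{−m − i(d−n)} + ε_m·L^{n − mn/d}, where ε_m = 1 if d divides m and ε_m = 0 otherwise. Then (L^n T^{−d} − 1)(L T^{−1} − 1)·Σ_{m≥1} c_m T^m = L^n(h L² T^{−d} + L T^{−1} − 1) as an identity of Laurent series in T over ℤ[L, L⁻¹, h], i.e. formally Σ_{m≥1} c_m T^m = L^n · (h·L²·T^{−d} + L·T^{−1} − 1) / ((L^n T^{−d} − 1)(L T^{−1} − 1)). -/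

import Mathlib

noncomputable section Ex41

open Polynomial PowerSeries HahnSeries Finset

abbrev R41 : Type := Polynomial (LaurentPolynomial ℤ)
def Lz41 (z : ℤ) : R41 := Polynomial.C (LaurentPolynomial.T z)
def h41 : R41 := Polynomial.X

def c41 (n d m : ℕ) : R41 :=
  h41 * Lz41 2 * (∑ j ∈ Finset.range ((m - 1) / d + 1), Lz41 (-(m : ℤ) + (j : ℤ) * ((d : ℤ) - n)))
    + (if d ∣ m then Lz41 ((n : ℤ) - (m / d : ℕ) * (n : ℤ)) else 0)

def fc41 (n d m : ℕ) : R41 := if m = 0 then 0 else c41 n d m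

lemma Lz41_mul (a b : ℤ) : Lz41 a * Lz41 b = Lz41 (a + b) := by
  unfold Lz41; rw [← Polynomial.C_mul, ← LaurentPolynomial.T_add]

def D41 (n d k : ℕ) : R41 :=
  (if d ∣ k then h41 * Lz41 (2 - (k / d : ℕ) * (n : ℤ)) else 0)
    + (if d ∣ (k + 1) then Lz41 (1 + (n : ℤ) - ((k + 1) / d : ℕ) * (n : ℤ)) else 0)
    - (if d ∣ k then Lz41 ((n : ℤ) - (k / d : ℕ) * (n : ℤ)) else 0)

lemma Dlem (n d : ℕ) (hd : 3 ≤ d) (k : ℕ) (hk : 1 ≤ k) :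
    c41 n d (k + 1) * Lz41 1 - c41 n d k = D41 n d k := by
  have hsd : k / d = (k - 1) / d + if d ∣ k then 1 else 0 := by
    conv_lhs => rw [show k = (k - 1) + 1 by omega]
    rw [Nat.succ_div, show k - 1 + 1 = k by omega]
  unfold c41 D41
  simp only [Nat.add_sub_cancel]
  by_cases hdk : d ∣ k
  · have hk1 : ¬ d ∣ (k + 1) := by
      intro hdk1
      have := Nat.dvd_sub hdk1 hdk
      simp at this; omega
    simp only [if_pos hdk, if_neg hk1]
    rw [if_pos hdk] at hsd
    have hkd : ((k / d : ℕ) : ℤ) * (d : ℤ) = (k : ℤ) := by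
      exact_mod_cast congrArg (Nat.cast : ℕ → ℤ) (Nat.div_mul_cancel hdk)
    have hsum : (∑ j ∈ Finset.range (k / d + 1), Lz41 (-((k + 1 : ℕ) : ℤ) + (j : ℤ) * ((d : ℤ) - n))) * Lz41 1
        = (∑ j ∈ Finset.range ((k - 1) / d + 1), Lz41 (-(k : ℤ) + (j : ℤ) * ((d : ℤ) - n)))
          + Lz41 (-(k : ℤ) + ((k / d : ℕ) : ℤ) * ((d : ℤ) - n)) := by
      rw [Finset.sum_mul]
      have : ∀ j ∈ Finset.range (k / d + 1),
          Lz41 (-((k + 1 : ℕ) : ℤ) + (j : ℤ) * ((d : ℤ) - n)) * Lz41 1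
            = Lz41 (-(k : ℤ) + (j : ℤ) * ((d : ℤ) - n)) := by
        intro j _; rw [Lz41_mul]; congr 1; push_cast; ring
      rw [Finset.sum_congr rfl this, hsd, Finset.sum_range_succ]
    have hmul : Lz41 2 * Lz41 (-(k : ℤ) + ((k / d : ℕ) : ℤ) * ((d : ℤ) - n))
        = Lz41 (2 - (k / d : ℕ) * (n : ℤ)) := by
      rw [Lz41_mul]; congr 1; linear_combination hkd
    linear_combination (h41 * Lz41 2) * hsum + h41 * hmul
  · simp only [if_neg hdk]
    rw [if_neg hdk] at hsd
    have hsum : (∑ j ∈ Finset.range (k / d + 1), Lz41 (-((k + 1 : ℕ) : ℤ) + (j : ℤ) * ((d : ℤ) - n))) * Lz41 1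
        = ∑ j ∈ Finset.range ((k - 1) / d + 1), Lz41 (-(k : ℤ) + (j : ℤ) * ((d : ℤ) - n)) := by
      rw [Finset.sum_mul, hsd]
      refine Finset.sum_congr rfl fun j _ => ?_
      rw [Lz41_mul]; congr 1; push_cast; ring
    by_cases hdk1 : d ∣ (k + 1)
    · simp only [if_pos hdk1]
      have hmul : Lz41 ((n : ℤ) - ((k + 1) / d : ℕ) * (n : ℤ)) * Lz41 1
          = Lz41 (1 + (n : ℤ) - ((k + 1) / d : ℕ) * (n : ℤ)) := by
        rw [Lz41_mul]; congr 1; ring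
      linear_combination (h41 * Lz41 2) * hsum + hmul
    · simp only [if_neg hdk1]
      linear_combination (h41 * Lz41 2) * hsum


noncomputable def g41 (n d m : ℕ) : R41 :=
  fc41 n d m * Lz41 1 - (if 1 ≤ m then fc41 n d (m - 1) else 0)

lemma Dshift (n d : ℕ) (hd3 : 3 ≤ d) (k : ℕ) : D41 n d (k + d) * Lz41 (n : ℤ) = D41 n d k := by
  have hdpos : 0 < d := by omega
  unfold D41
  rw [show k + d + 1 = (k + 1) + d by omega]
  simp only [Nat.dvd_add_self_right, Nat.add_div_right _ hdpos, Nat.cast_add, Nat.cast_one]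
  have E1 : Lz41 (2 - (((k / d : ℕ) : ℤ) + 1) * (n : ℤ)) * Lz41 (n : ℤ)
      = Lz41 (2 - ((k / d : ℕ) : ℤ) * (n : ℤ)) := by rw [Lz41_mul]; congr 1; ring
  have E2 : Lz41 (1 + (n : ℤ) - ((((k + 1) / d : ℕ) : ℤ) + 1) * (n : ℤ)) * Lz41 (n : ℤ)
      = Lz41 (1 + (n : ℤ) - (((k + 1) / d : ℕ) : ℤ) * (n : ℤ)) := by rw [Lz41_mul]; congr 1; ring
  have E3 : Lz41 ((n : ℤ) - (((k / d : ℕ) : ℤ) + 1) * (n : ℤ)) * Lz41 (n : ℤ)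
      = Lz41 ((n : ℤ) - ((k / d : ℕ) : ℤ) * (n : ℤ)) := by rw [Lz41_mul]; congr 1; ring
  split_ifs <;>
    first
      | linear_combination h41 * E1 + E2 - E3
      | linear_combination h41 * E1 - E3
      | linear_combination E2
      | ring_nf

lemma g0 (n d : ℕ) : g41 n d 0 = 0 := by simp [g41, fc41]

lemma c1 (n d : ℕ) (hd3 : 3 ≤ d) : c41 n d 1 = h41 * Lz41 2 * Lz41 (-1) := by
  unfold c41
  rw [if_neg (by rw [Nat.dvd_one]; omega)]
  norm_num

lemma g1 (n d : ℕ) (hd3 : 3 ≤ d) : g41 n d 1 = h41 * Lz41 2 * Lz41 (-1) * Lz41 1 := by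
  simp [g41, fc41, c1 n d hd3]

lemma g_eq (n d : ℕ) (hd3 : 3 ≤ d) (m : ℕ) (hm : 2 ≤ m) : g41 n d m = D41 n d (m - 1) := by
  unfold g41 fc41
  rw [if_neg (by omega), if_pos (by omega), if_neg (by omega)]
  have := Dlem n d hd3 (m - 1) (by omega)
  rwa [show m - 1 + 1 = m by omega] at this

lemma not_dvd41 {d m : ℕ} (h1 : 1 ≤ m) (h2 : m < d) : ¬ d ∣ m := fun h =>
  absurd (Nat.le_of_dvd (by omega) h) (by omega)

lemma main41 (n d : ℕ) (hn : 3 ≤ n) (hd : n ≤ d) (m : ℕ) :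
    g41 n d m * Lz41 (n : ℤ) - (if d ≤ m then g41 n d (m - d) else 0)
      = (if m = 1 then h41 * Lz41 ((n : ℤ) + 2) else 0)
        + (if m = d then Lz41 ((n : ℤ) + 1) else 0)
        - (if m = d + 1 then Lz41 (n : ℤ) else 0) := by
  have hd3 : 3 ≤ d := le_trans hn hd
  by_cases hm0 : m = 0
  · subst hm0
    rw [g0, if_neg (by omega), if_neg (by omega), if_neg (by omega), if_neg (by omega)]
    ring
  by_cases hm1 : m = 1
  · subst hm1
    rw [g1 n d hd3, if_neg (by omega), if_pos rfl, if_neg (by omega), if_neg (by omega)]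
    have : h41 * Lz41 2 * Lz41 (-1) * Lz41 1 * Lz41 (n : ℤ) = h41 * Lz41 ((n : ℤ) + 2) := by
      rw [mul_assoc, mul_assoc, mul_assoc, Lz41_mul, Lz41_mul, Lz41_mul]
      congr 1
      ring
    rw [this]; ring
  -- now 2 ≤ m
  have hm2 : 2 ≤ m := by omega
  rw [g_eq n d hd3 m hm2]
  by_cases hmd : m < d
  · -- D41 (m-1) = 0 since d ∤ m-1 and d ∤ m
    have h1 : ¬ d ∣ (m - 1) := not_dvd41 (by omega) (by omega)
    have h2 : ¬ d ∣ (m - 1 + 1) := by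
      rw [show m - 1 + 1 = m by omega]; exact not_dvd41 (by omega) (by omega)
    rw [if_neg (by omega), if_neg (by omega), if_neg (by omega), if_neg (by omega)]
    unfold D41
    rw [if_neg h1, if_neg h1, if_neg h2]
    ring
  by_cases hmd2 : m = d
  · have h1 : ¬ d ∣ (m - 1) := not_dvd41 (by omega) (by omega)
    have h2 : d ∣ (m - 1 + 1) := by rw [show m - 1 + 1 = m by omega, hmd2]
    rw [if_pos (by omega), if_neg (by omega), if_pos hmd2, if_neg (by omega)]
    rw [show m - d = 0 by omega, g0]
    unfold D41
    rw [if_neg h1, if_neg h1, if_pos h2,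
      show (m - 1 + 1) / d = 1 by rw [show m - 1 + 1 = m by omega, hmd2, Nat.div_self (by omega)]]
    have e : Lz41 (1 + (n : ℤ) - ((1 : ℕ) : ℤ) * (n : ℤ)) * Lz41 (n : ℤ) = Lz41 ((n : ℤ) + 1) := by
      rw [Lz41_mul]; congr 1; push_cast; ring
    linear_combination e
  by_cases hmd3 : m = d + 1
  · subst hmd3
    have h1 : d ∣ (d + 1 - 1) := by simp
    have h2 : ¬ d ∣ (d + 1 - 1 + 1) := by
      simp only [Nat.add_sub_cancel]
      intro h
      have := Nat.dvd_sub h (dvd_refl d)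
      simp at this; omega
    rw [if_pos (by omega), if_neg (by omega), if_neg (by omega), if_pos rfl]
    rw [show d + 1 - d = 1 by omega, g1 n d hd3]
    unfold D41
    rw [if_pos h1, if_pos h1, if_neg h2, show d + 1 - 1 = d by omega, Nat.div_self (by omega)]
    have e1 : h41 * Lz41 (2 - ((1 : ℕ) : ℤ) * (n : ℤ)) * Lz41 (n : ℤ) = h41 * Lz41 2 := by
      rw [mul_assoc, Lz41_mul]; congr 2; push_cast; ring
    have e2 : Lz41 ((n : ℤ) - ((1 : ℕ) : ℤ) * (n : ℤ)) * Lz41 (n : ℤ) = Lz41 (n : ℤ) := by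
      rw [Lz41_mul]; congr 1; push_cast; ring
    have e3 : h41 * Lz41 2 * Lz41 (-1) * Lz41 1 = h41 * Lz41 2 := by
      rw [mul_assoc, mul_assoc, Lz41_mul, Lz41_mul]; norm_num
    linear_combination e1 - e2 - e3
  -- m ≥ d + 2
  have hm : d + 2 ≤ m := by omega
  rw [if_pos (by omega), if_neg hm1, if_neg hmd2, if_neg hmd3]
  rw [g_eq n d hd3 (m - d) (by omega)]
  have := Dshift n d hd3 (m - d - 1)
  rw [show m - d - 1 + d = m - 1 by omega] at this
  rw [this]; ring

lemma coeff_mul_C_sub_X_pow41 (φ : PowerSeries R41) (a : R41) (k m : ℕ) :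
    PowerSeries.coeff m (φ * (PowerSeries.C a - PowerSeries.X ^ k))
      = PowerSeries.coeff m φ * a - (if k ≤ m then PowerSeries.coeff (m - k) φ else 0) := by
  rw [mul_sub, map_sub, PowerSeries.coeff_mul_C, PowerSeries.coeff_mul_X_pow']

lemma coeff_C_mul_X_pow41 (a : R41) (k m : ℕ) :
    PowerSeries.coeff m (PowerSeries.C a * PowerSeries.X ^ k) = if m = k then a else 0 := by
  rw [PowerSeries.coeff_mul_X_pow', PowerSeries.coeff_C]
  split_ifs <;> first | rfl | omega

lemma key_ps (n d : ℕ) (hn : 3 ≤ n) (hd : n ≤ d) :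
    (PowerSeries.mk (fc41 n d) * (PowerSeries.C (Lz41 1) - PowerSeries.X ^ 1))
        * (PowerSeries.C (Lz41 (n : ℤ)) - PowerSeries.X ^ d)
      = PowerSeries.C (h41 * Lz41 ((n : ℤ) + 2)) * PowerSeries.X ^ 1
        + PowerSeries.C (Lz41 ((n : ℤ) + 1)) * PowerSeries.X ^ d
        - PowerSeries.C (Lz41 (n : ℤ)) * PowerSeries.X ^ (d + 1) := by
  refine PowerSeries.ext fun m => ?_
  rw [coeff_mul_C_sub_X_pow41, coeff_mul_C_sub_X_pow41, coeff_mul_C_sub_X_pow41,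
    map_sub, map_add, coeff_C_mul_X_pow41, coeff_C_mul_X_pow41, coeff_C_mul_X_pow41]
  simp only [PowerSeries.coeff_mk]
  have H := main41 n d hn hd m
  unfold g41 at H
  exact H

lemma final41 (n d : ℕ) (hn : 3 ≤ n) (hd : n ≤ d) :
    (HahnSeries.single (-(d : ℤ)) (Lz41 (n : ℤ)) - 1) * (HahnSeries.single (-1 : ℤ) (Lz41 1) - 1)
        * HahnSeries.ofPowerSeries ℤ R41 (PowerSeries.mk (fc41 n d))
      = HahnSeries.single (-(d : ℤ)) (h41 * Lz41 ((n : ℤ) + 2))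
        + HahnSeries.single (-1 : ℤ) (Lz41 ((n : ℤ) + 1))
        - HahnSeries.single (0 : ℤ) (Lz41 (n : ℤ)) := by
  have hkey := congrArg (HahnSeries.ofPowerSeries ℤ R41) (key_ps n d hn hd)
  simp only [map_mul, map_sub, map_add, HahnSeries.ofPowerSeries_C, HahnSeries.C_apply,
    HahnSeries.ofPowerSeries_X_pow, Nat.cast_add, Nat.cast_one, HahnSeries.single_mul_single,
    zero_add, mul_one, one_mul] at hkey
  have e1 : HahnSeries.single (-(d : ℤ)) (1 : R41) * HahnSeries.single (0 : ℤ) (Lz41 (n : ℤ))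
      = HahnSeries.single (-(d : ℤ)) (Lz41 (n : ℤ)) := by
    rw [HahnSeries.single_mul_single]; norm_num
  have e2 : HahnSeries.single (-(d : ℤ)) (1 : R41) * HahnSeries.single ((d : ℤ)) (1 : R41)
      = 1 := by
    rw [HahnSeries.single_mul_single]; norm_num [HahnSeries.single_zero_one]
  have h1 : HahnSeries.single (-(d : ℤ)) (Lz41 (n : ℤ)) - 1
      = HahnSeries.single (-(d : ℤ)) (1 : R41)
        * (HahnSeries.single (0 : ℤ) (Lz41 (n : ℤ)) - HahnSeries.single ((d : ℤ)) (1 : R41)) := by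
    rw [← e1, ← e2]; ring
  have e3 : HahnSeries.single (-1 : ℤ) (1 : R41) * HahnSeries.single (0 : ℤ) (Lz41 1)
      = HahnSeries.single (-1 : ℤ) (Lz41 1) := by
    rw [HahnSeries.single_mul_single]; norm_num
  have e4 : HahnSeries.single (-1 : ℤ) (1 : R41) * HahnSeries.single (1 : ℤ) (1 : R41)
      = 1 := by
    rw [HahnSeries.single_mul_single]; norm_num [HahnSeries.single_zero_one]
  have h2 : HahnSeries.single (-1 : ℤ) (Lz41 1) - 1
      = HahnSeries.single (-1 : ℤ) (1 : R41)
        * (HahnSeries.single (0 : ℤ) (Lz41 1) - HahnSeries.single (1 : ℤ) (1 : R41)) := by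
    rw [← e3, ← e4]; ring
  have r1 : HahnSeries.single (-(d : ℤ)) (1 : R41) * HahnSeries.single (-1 : ℤ) (1 : R41)
        * HahnSeries.single (1 : ℤ) (h41 * Lz41 ((n : ℤ) + 2))
      = HahnSeries.single (-(d : ℤ)) (h41 * Lz41 ((n : ℤ) + 2)) := by
    rw [HahnSeries.single_mul_single, HahnSeries.single_mul_single]; norm_num
  have r2 : HahnSeries.single (-(d : ℤ)) (1 : R41) * HahnSeries.single (-1 : ℤ) (1 : R41)
        * HahnSeries.single ((d : ℤ)) (Lz41 ((n : ℤ) + 1))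
      = HahnSeries.single (-1 : ℤ) (Lz41 ((n : ℤ) + 1)) := by
    rw [HahnSeries.single_mul_single, HahnSeries.single_mul_single]
    norm_num
  have r3 : HahnSeries.single (-(d : ℤ)) (1 : R41) * HahnSeries.single (-1 : ℤ) (1 : R41)
        * HahnSeries.single ((d : ℤ) + 1) (Lz41 (n : ℤ))
      = HahnSeries.single (0 : ℤ) (Lz41 (n : ℤ)) := by
    rw [HahnSeries.single_mul_single, HahnSeries.single_mul_single,
      show -(d : ℤ) + -1 + ((d : ℤ) + 1) = 0 by ring]
    norm_num
  calc (HahnSeries.single (-(d : ℤ)) (Lz41 (n : ℤ)) - 1)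
        * (HahnSeries.single (-1 : ℤ) (Lz41 1) - 1)
        * HahnSeries.ofPowerSeries ℤ R41 (PowerSeries.mk (fc41 n d))
      = HahnSeries.single (-(d : ℤ)) (1 : R41) * HahnSeries.single (-1 : ℤ) (1 : R41)
          * (HahnSeries.ofPowerSeries ℤ R41 (PowerSeries.mk (fc41 n d))
            * (HahnSeries.single (0 : ℤ) (Lz41 1) - HahnSeries.single (1 : ℤ) (1 : R41))
            * (HahnSeries.single (0 : ℤ) (Lz41 (n : ℤ)) - HahnSeries.single ((d : ℤ)) (1 : R41))) := by
        rw [h1, h2]; ring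
    _ = HahnSeries.single (-(d : ℤ)) (1 : R41) * HahnSeries.single (-1 : ℤ) (1 : R41)
          * (HahnSeries.single (1 : ℤ) (h41 * Lz41 ((n : ℤ) + 2))
            + HahnSeries.single ((d : ℤ)) (Lz41 ((n : ℤ) + 1))
            - HahnSeries.single ((d : ℤ) + 1) (Lz41 (n : ℤ))) := by rw [hkey]
    _ = HahnSeries.single (-(d : ℤ)) (h41 * Lz41 ((n : ℤ) + 2))
          + HahnSeries.single (-1 : ℤ) (Lz41 ((n : ℤ) + 1))
          - HahnSeries.single (0 : ℤ) (Lz41 (n : ℤ)) := by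
        rw [← r1, ← r2, ← r3]; ring

end Ex41


/-- The ring `ℤ[L, L⁻¹, h]`, realized as polynomials in `h` over Laurent polynomials
in `L`; `Lz z` denotes `L ^ z` for `z : ℤ`, and `h` is `Polynomial.X`. The identity
of Laurent series in `T` over this ring from Example 4.1:
`(Lⁿ T⁻ᵈ − 1)(L T⁻¹ − 1) · Σ_{m≥1} c_m Tᵐ = Lⁿ (h L² T⁻ᵈ + L T⁻¹ − 1)`, where
`c_m = h L² Σ_{i ∈ (−m/d,0] ∩ ℤ} L^(−m−i(d−n)) + ε_m L^(n−mn/d)` (the integers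
`i ∈ (−m/d, 0]` being parametrized as `i = −j` for `j ∈ {0, …, ⌊(m−1)/d⌋}`). -/
theorem stmt_12 (n d : ℕ) (hn : 3 ≤ n) (hd : n ≤ d) :
    letI R := Polynomial (LaurentPolynomial ℤ)
    letI Lz : ℤ → R := fun z => Polynomial.C (LaurentPolynomial.T z)
    letI h : R := Polynomial.X
    letI c : ℕ → R := fun m =>
      h * Lz 2 * (∑ j ∈ Finset.range ((m - 1) / d + 1), Lz (-(m : ℤ) + (j : ℤ) * ((d : ℤ) - n)))
        + (if d ∣ m then Lz ((n : ℤ) - (m / d : ℕ) * (n : ℤ)) else 0)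
    letI S : LaurentSeries R :=
      HahnSeries.ofPowerSeries ℤ R (PowerSeries.mk fun m => if m = 0 then 0 else c m)
    (HahnSeries.single (-(d : ℤ)) (Lz n) - 1) * (HahnSeries.single (-1 : ℤ) (Lz 1) - 1) * S
      = HahnSeries.single (-(d : ℤ)) (h * Lz ((n : ℤ) + 2))
        + HahnSeries.single (-1 : ℤ) (Lz ((n : ℤ) + 1))
        - HahnSeries.single (0 : ℤ) (Lz n) := by
  exact final41 n d hn hd
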